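/- arXiv:2311.10058 — 2 statements merged into one kernel-verified Lean document; each statement's English description precedes it below -/
import Mathlib

section
/- Let μ, γ ∈ (0,1) and let (G_μ[0])^{1/2} be the Fourier multiplier with symbol (√μ|ξ| tanh(√μ|ξ|)/(1+γ tanh(√μ|ξ|)))^{1/2}. Then there is a universal constant C > 0 such that for all f, (1/C) |f|_{Ḣ_μ^{1/2}} ≤ μ^{-1/2} |(G_μ[0])^{1/2} f|_{L²} ≤ C |f|_{Ḣ_μ^{1/2}}, where |f|_{Ḣ_μ^{1/2}} = | |ξ|(1+√μ|ξ|)^{-1/2} f̂ |_{L²_ξ}. -/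
/-!
With `t = √μ |ξ|` the Sobolev weight is `μ ξ² / (1 + √μ |ξ|) = t² / (1 + t)`, and the symbol is
`t tanh t / (1 + γ tanh t)`. Since `t / (1 + t) ≤ tanh t ≤ min 1 (2 t)` and `1 ≤ 1 + γ tanh t ≤ 2`,
the two weights are comparable pointwise with constants independent of `μ` and `γ`; integrating
against `‖f̂‖²` and taking square roots gives the equivalence.
-/

noncomputable section
open MeasureTheory

namespace Real

lemma tanh_nonneg {t : ℝ} (ht : 0 ≤ t) : 0 ≤ tanh t := by
  rw [tanh_eq_sinh_div_cosh]
  exact div_nonneg (sinh_nonneg_iff.2 ht) (cosh_pos t).le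

lemma continuous_tanh : Continuous tanh := by
  simp only [funext tanh_eq_sinh_div_cosh]
  exact continuous_sinh.div continuous_cosh fun t => (cosh_pos t).ne'

lemma div_one_add_le_tanh {t : ℝ} (ht : 0 ≤ t) : t / (1 + t) ≤ tanh t := by
  have h2t : 1 + 2 * t ≤ exp t * exp t := by
    rw [← exp_add, ← two_mul, add_comm]; exact add_one_le_exp _
  have hinv : exp (-t) * exp t = 1 := by rw [← exp_add, neg_add_cancel, exp_zero]
  have key : exp (-t) * (1 + 2 * t) ≤ exp t :=
    calc exp (-t) * (1 + 2 * t) ≤ exp (-t) * (exp t * exp t) := by gcongr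
      _ = exp t := by rw [← mul_assoc, hinv, one_mul]
  rw [tanh_eq, div_le_div_iff₀ (by positivity) (by positivity)]
  linarith

lemma tanh_le_two_mul {t : ℝ} (ht : 0 ≤ t) : tanh t ≤ 2 * t := by
  have h2t : 1 - 2 * t ≤ exp (-t) * exp (-t) := by
    rw [← exp_add, ← two_mul, sub_eq_neg_add, ← mul_neg, mul_comm]; exact add_one_le_exp _
  have hinv : exp (-t) * exp t = 1 := by rw [← exp_add, neg_add_cancel, exp_zero]
  rw [tanh_eq, div_le_iff₀ (by positivity)]
  nlinarith [mul_le_mul_of_nonneg_left h2t (exp_pos t).le, exp_pos (-t)]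

end Real

open Real

/-- The symbol of `G_μ[0]` at frequency `ξ` is `flatDNSymbol γ (√μ * |ξ|)`. -/
def flatDNSymbol (γ t : ℝ) : ℝ := t * tanh t / (1 + γ * tanh t)

lemma measurable_flatDNSymbol (γ : ℝ) : Measurable (flatDNSymbol γ) := by
  unfold flatDNSymbol
  have := continuous_tanh.measurable
  fun_prop

lemma flatDNSymbol_nonneg {γ t : ℝ} (hγ : 0 ≤ γ) (ht : 0 ≤ t) : 0 ≤ flatDNSymbol γ t := by
  have := tanh_nonneg ht
  unfold flatDNSymbol
  positivity

lemma sq_div_one_add_le_two_mul_flatDNSymbol {γ t : ℝ} (hγ0 : 0 ≤ γ) (hγ1 : γ ≤ 1)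
    (ht : 0 ≤ t) : t ^ 2 / (1 + t) ≤ 2 * flatDNSymbol γ t := by
  have hT0 := tanh_nonneg ht
  have hD : 1 + γ * tanh t ≤ 2 := by nlinarith [tanh_lt_one t]
  calc t ^ 2 / (1 + t) = t * (t / (1 + t)) := by ring
    _ ≤ t * tanh t := by gcongr; exact div_one_add_le_tanh ht
    _ ≤ 2 * (t * tanh t) / (1 + γ * tanh t) := by
      rw [le_div_iff₀ (by positivity)]; nlinarith [mul_nonneg ht hT0]
    _ = 2 * flatDNSymbol γ t := by rw [flatDNSymbol, mul_div_assoc]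

lemma flatDNSymbol_le_three_mul_sq_div_one_add {γ t : ℝ} (hγ : 0 ≤ γ) (ht : 0 ≤ t) :
    flatDNSymbol γ t ≤ 3 * (t ^ 2 / (1 + t)) := by
  have hT0 := tanh_nonneg ht
  calc flatDNSymbol γ t ≤ t * tanh t :=
        div_le_self (by positivity) (le_add_of_nonneg_right (by positivity))
    _ ≤ 3 * (t ^ 2 / (1 + t)) := by
      rw [mul_div_assoc', le_div_iff₀ (by positivity)]
      nlinarith [mul_le_mul_of_nonneg_left (tanh_le_two_mul ht) ht,
        mul_le_mul_of_nonneg_left (tanh_lt_one t).le (mul_nonneg ht ht)]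

lemma const_mul_integral_mul_le_of_le {α : Type*} [MeasurableSpace α] {ν : Measure α}
    {v w φ : α → ℝ} {a b : ℝ} (hφ : ∀ x, 0 ≤ φ x) (hv : Integrable (fun x => v x * φ x) ν)
    (hw : Integrable (fun x => w x * φ x) ν) (h : ∀ x, a * v x ≤ b * w x) :
    a * ∫ x, v x * φ x ∂ν ≤ b * ∫ x, w x * φ x ∂ν := by
  rw [← integral_const_mul, ← integral_const_mul]
  refine integral_mono (hv.const_mul a) (hw.const_mul b) fun x => ?_
  simp only [← mul_assoc]
  exact mul_le_mul_of_nonneg_right (h x) (hφ x)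

namespace SchwartzMap

variable {E : Type*} [NormedAddCommGroup E] [NormedSpace ℝ E]

lemma integrable_mul_norm_sq_of_abs_le (g : 𝓢(ℝ, E)) {w : ℝ → ℝ}
    (hw : Measurable w) {K : ℝ} (hK : ∀ ξ, |w ξ| ≤ K * ξ ^ 2) :
    Integrable fun ξ => w ξ * ‖g ξ‖ ^ 2 := by
  have hg : Integrable fun ξ : ℝ => ‖ξ‖ ^ 2 * ‖g ξ‖ * ‖g ξ‖ :=
    (g.integrable_pow_mul volume 2).mul_bdd g.continuous.norm.aestronglyMeasurable
      (ae_of_all _ fun ξ => by simpa using g.norm_le_seminorm ℝ ξ)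
  refine (hg.const_mul K).mono'
    (hw.aestronglyMeasurable.mul (g.continuous.norm.pow 2).aestronglyMeasurable)
    (ae_of_all _ fun ξ => ?_)
  rw [norm_mul, norm_pow, norm_norm, Real.norm_eq_abs, norm_eq_abs (ξ : ℝ), sq_abs]
  calc |w ξ| * ‖g ξ‖ ^ 2 ≤ K * ξ ^ 2 * ‖g ξ‖ ^ 2 := by gcongr; exact hK ξ
    _ = K * (ξ ^ 2 * ‖g ξ‖ * ‖g ξ‖) := by ring

theorem integral_flatDNSymbol_comparable (g : 𝓢(ℝ, E)) {μ γ : ℝ} (hμ : 0 < μ)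
    (hγ0 : 0 ≤ γ) (hγ1 : γ ≤ 1) :
    μ * ∫ ξ, ξ ^ 2 / (1 + √μ * |ξ|) * ‖g ξ‖ ^ 2 ≤
        3 * ∫ ξ, flatDNSymbol γ (√μ * |ξ|) * ‖g ξ‖ ^ 2 ∧
      ∫ ξ, flatDNSymbol γ (√μ * |ξ|) * ‖g ξ‖ ^ 2 ≤
        3 * μ * ∫ ξ, ξ ^ 2 / (1 + √μ * |ξ|) * ‖g ξ‖ ^ 2 := by
  have ht (ξ : ℝ) : 0 ≤ √μ * |ξ| := by positivity
  have hrescale (ξ : ℝ) : μ * (ξ ^ 2 / (1 + √μ * |ξ|)) = (√μ * |ξ|) ^ 2 / (1 + √μ * |ξ|) := by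
    rw [mul_pow, sq_sqrt hμ.le, sq_abs, mul_div_assoc]
  have hlow (ξ : ℝ) : μ * (ξ ^ 2 / (1 + √μ * |ξ|)) ≤ 3 * flatDNSymbol γ (√μ * |ξ|) := by
    rw [hrescale]
    linarith [sq_div_one_add_le_two_mul_flatDNSymbol hγ0 hγ1 (ht ξ),
      flatDNSymbol_nonneg hγ0 (ht ξ)]
  have hupp (ξ : ℝ) : flatDNSymbol γ (√μ * |ξ|) ≤ 3 * μ * (ξ ^ 2 / (1 + √μ * |ξ|)) := by
    rw [mul_assoc, hrescale]
    exact flatDNSymbol_le_three_mul_sq_div_one_add hγ0 (ht ξ)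
  have hweight_le (ξ : ℝ) : ξ ^ 2 / (1 + √μ * |ξ|) ≤ ξ ^ 2 :=
    div_le_self (sq_nonneg ξ) (le_add_of_nonneg_right (ht ξ))
  have hA := g.integrable_mul_norm_sq_of_abs_le (w := fun ξ => ξ ^ 2 / (1 + √μ * |ξ|))
    (K := 1) (by fun_prop) fun ξ => by
      rw [abs_of_nonneg (by positivity), one_mul]; exact hweight_le ξ
  have hB := g.integrable_mul_norm_sq_of_abs_le (w := fun ξ => flatDNSymbol γ (√μ * |ξ|))
    (K := 3 * μ) ((measurable_flatDNSymbol γ).comp (by fun_prop)) fun ξ => by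
      rw [abs_of_nonneg (flatDNSymbol_nonneg hγ0 (ht ξ))]
      exact (hupp ξ).trans (mul_le_mul_of_nonneg_left (hweight_le ξ) (by positivity))
  refine ⟨const_mul_integral_mul_le_of_le (fun _ => by positivity) hA hB hlow, ?_⟩
  simpa only [one_mul] using const_mul_integral_mul_le_of_le (a := 1)
    (fun _ => by positivity) hB hA fun ξ => (one_mul _).trans_le (hupp ξ)

end SchwartzMap

lemma sqrt_comparable_of_comparable {μ c A B : ℝ} (hμ : 0 < μ) (hc : 0 < c)
    (hlow : μ * A ≤ c * B) (hupp : B ≤ c * μ * A) :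
    1 / √c * √A ≤ μ ^ (-(1 : ℝ) / 2) * √B ∧ μ ^ (-(1 : ℝ) / 2) * √B ≤ √c * √A := by
  have hrpow : μ ^ (-(1 : ℝ) / 2) = (√μ)⁻¹ := by
    rw [neg_div, rpow_neg hμ.le, sqrt_eq_rpow]
  have hsμ : 0 < √μ := sqrt_pos.2 hμ
  have hsc : 0 < √c := sqrt_pos.2 hc
  have hlow' : √μ * √A ≤ √c * √B := by
    rw [← sqrt_mul hμ.le, ← sqrt_mul hc.le]; exact sqrt_le_sqrt hlow
  have hupp' : √B ≤ √c * √μ * √A := by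
    rw [← sqrt_mul hc.le, ← sqrt_mul (mul_nonneg hc.le hμ.le)]; exact sqrt_le_sqrt (by linarith)
  rw [hrpow, one_div_mul_eq_div, inv_mul_eq_div, div_le_div_iff₀ hsc hsμ, div_le_iff₀ hsμ]
  constructor <;> linarith

/-- uniform norm equivalence for the square root of the flat
two-layer Dirichlet–Neumann symbol: with `(G_μ[0])^{1/2}` the multiplier whose symbol
squared is `√μ|ξ|tanh(√μ|ξ|)/(1+γtanh(√μ|ξ|))`,
`(1/C)|f|_{Ḣ_μ^{1/2}} ≤ μ^{-1/2}|(G_μ[0])^{1/2}f|_{L²} ≤ C|f|_{Ḣ_μ^{1/2}}`, where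
`|f|_{Ḣ_μ^{1/2}}² = ∫ ξ²(1+√μ|ξ|)^{-1} ‖f̂‖²` (norms via Plancherel). -/
theorem flat_DN_sqrt_equivalence :
    ∃ C > (0:ℝ), ∀ μ ∈ Set.Ioo (0:ℝ) 1, ∀ γ ∈ Set.Ioo (0:ℝ) 1, ∀ f : SchwartzMap ℝ ℂ,
      (1 / C) *
          (∫ ξ : ℝ, ξ ^ 2 / (1 + Real.sqrt μ * |ξ|) *
              ‖FourierTransform.fourier (⇑f : ℝ → ℂ) ξ‖ ^ 2).sqrt ≤
        μ ^ (-(1:ℝ)/2) *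
          (∫ ξ : ℝ,
              Real.sqrt μ * |ξ| * Real.tanh (Real.sqrt μ * |ξ|) /
                  (1 + γ * Real.tanh (Real.sqrt μ * |ξ|)) *
                ‖FourierTransform.fourier (⇑f : ℝ → ℂ) ξ‖ ^ 2).sqrt ∧
      μ ^ (-(1:ℝ)/2) *
          (∫ ξ : ℝ,
              Real.sqrt μ * |ξ| * Real.tanh (Real.sqrt μ * |ξ|) /
                  (1 + γ * Real.tanh (Real.sqrt μ * |ξ|)) *
                ‖FourierTransform.fourier (⇑f : ℝ → ℂ) ξ‖ ^ 2).sqrt ≤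
        C * (∫ ξ : ℝ, ξ ^ 2 / (1 + Real.sqrt μ * |ξ|) *
              ‖FourierTransform.fourier (⇑f : ℝ → ℂ) ξ‖ ^ 2).sqrt := by
  refine ⟨√3, by positivity, fun μ ⟨hμ, _⟩ γ ⟨hγ0, hγ1⟩ f => ?_⟩
  rw [← SchwartzMap.fourier_coe]
  obtain ⟨hlow, hupp⟩ :=
    (FourierTransform.fourier f).integral_flatDNSymbol_comparable hμ hγ0.le hγ1.le
  exact sqrt_comparable_of_comparable hμ three_pos hlow hupp
end
end

section
/- Let μ, γ ∈ (0,1) and define a(ξ) = (1 + γ tanh(√μ|ξ|))^{-1/2}. Then there exists a constant C, independent of μ and γ, such that for all ξ, ρ ∈ ℝ, |a(ξ) − a(ρ)| · ⟨ρ⟩ ≤ C ⟨ξ − ρ⟩, where ⟨ξ⟩ = (1 + ξ²)^{1/2}. -/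
/-!
Write `a(ξ) = (1 + γ tanh (√μ |ξ|))^{-1/2}`. Since `x ↦ x^{-1/2}` is `1`-Lipschitz on
`[1, ∞)`, `|a(ξ) - a(ρ)| ≤ |tanh (√μ |ξ|) - tanh (√μ |ρ|)| ≤ 1`, which settles the case
`|ρ| < 2 |ξ - ρ|`, where `⟨ρ⟩ ≤ 3 ⟨ξ - ρ⟩`. Otherwise `|ξ| ≥ |ρ| / 2`, and the mean value
theorem with `tanh' = cosh⁻² ≤ 4 e^{-2|x|}` gives `|a(ξ) - a(ρ)| ≤ 4 e^{-r} √μ |ξ - ρ|` for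
`r = √μ |ρ|`; this factor `e^{-r}` absorbs the weight `1 + |ρ|` because `(√μ + r) e^{-r} ≤ 1`
for `μ ≤ 1`.
-/

open Real

namespace Real

theorem hasDerivAt_tanh (x : ℝ) : HasDerivAt tanh (cosh x ^ 2)⁻¹ x := by
  have h := (hasDerivAt_sinh x).div (hasDerivAt_cosh x) (cosh_pos x).ne'
  rw [show sinh / cosh = tanh from funext fun y => (tanh_eq_sinh_div_cosh y).symm] at h
  refine h.congr_deriv ?_
  rw [inv_eq_one_div, ← cosh_sq_sub_sinh_sq x]
  ring

theorem tanh_nonneg_s13 {x : ℝ} (hx : 0 ≤ x) : 0 ≤ tanh x := by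
  rw [tanh_eq_sinh_div_cosh]
  exact div_nonneg (sinh_nonneg_iff.mpr hx) (cosh_pos x).le

theorem inv_cosh_sq_le (x : ℝ) : (cosh x ^ 2)⁻¹ ≤ 4 * exp (-(2 * |x|)) := by
  have hcosh : exp |x| ≤ 2 * cosh x := by
    rw [← cosh_abs, cosh_eq]
    linarith [exp_pos (-|x|)]
  calc (cosh x ^ 2)⁻¹ = ((cosh x)⁻¹) ^ 2 := (inv_pow _ _).symm
    _ ≤ (2 * exp (-|x|)) ^ 2 := by
      gcongr
      rw [exp_neg, inv_le_comm₀ (cosh_pos x) (by positivity)]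
      rw [mul_inv, inv_inv]
      linarith
    _ = 4 * exp (-(2 * |x|)) := by
      rw [mul_pow, ← exp_nat_mul]
      ring_nf

theorem abs_tanh_sub_tanh_le {m s t : ℝ} (hs : m ≤ s) (ht : m ≤ t) :
    |tanh s - tanh t| ≤ 4 * exp (-(2 * m)) * |s - t| := by
  refine (convex_Ici m).norm_image_sub_le_of_norm_hasDerivWithin_le
    (fun x _ => (hasDerivAt_tanh x).hasDerivWithinAt) (fun x hx => ?_) ht hs
  rw [norm_of_nonneg (by positivity)]
  refine (inv_cosh_sq_le x).trans ?_
  have : m ≤ |x| := (Set.mem_Ici.mp hx).trans (le_abs_self x)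
  gcongr

end Real

theorem abs_sqrt_inv_sub_sqrt_inv_le {a b : ℝ} (ha : 1 ≤ a) (hb : 1 ≤ b) :
    |√a⁻¹ - √b⁻¹| ≤ |a - b| := by
  have hsa : 1 ≤ √a := one_le_sqrt.mpr ha
  have hsb : 1 ≤ √b := one_le_sqrt.mpr hb
  have hdiff : a - b = (√a - √b) * (√a + √b) := by
    linear_combination -sq_sqrt (show 0 ≤ a by linarith) + sq_sqrt (show 0 ≤ b by linarith)
  have hinv : (√a)⁻¹ - (√b)⁻¹ = (√b - √a) / (√a * √b) := by
    field_simp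
  rw [sqrt_inv, sqrt_inv, hinv, abs_div, abs_sub_comm, abs_of_pos (by positivity : 0 < √a * √b),
    hdiff, abs_mul, abs_of_pos (by positivity : 0 < √a + √b)]
  calc |√a - √b| / (√a * √b) ≤ |√a - √b| :=
        div_le_self (abs_nonneg _) (one_le_mul_of_one_le_of_one_le hsa hsb)
    _ ≤ |√a - √b| * (√a + √b) := le_mul_of_one_le_right (abs_nonneg _) (by linarith)

noncomputable def symbolA (μ γ ξ : ℝ) : ℝ := √((1 + γ * tanh (√μ * |ξ|))⁻¹)

section symbolA

variable {μ γ : ℝ} (hγ0 : 0 ≤ γ) (hγ1 : γ ≤ 1)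
include hγ0 hγ1

theorem abs_symbolA_sub_le (ξ ρ : ℝ) :
    |symbolA μ γ ξ - symbolA μ γ ρ| ≤ |tanh (√μ * |ξ|) - tanh (√μ * |ρ|)| := by
  have hone (x : ℝ) : 1 ≤ 1 + γ * tanh (√μ * |x|) :=
    le_add_of_nonneg_right (mul_nonneg hγ0 (tanh_nonneg_s13 (by positivity)))
  calc |symbolA μ γ ξ - symbolA μ γ ρ|
      ≤ |(1 + γ * tanh (√μ * |ξ|)) - (1 + γ * tanh (√μ * |ρ|))| :=
        abs_sqrt_inv_sub_sqrt_inv_le (hone ξ) (hone ρ)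
    _ = γ * |tanh (√μ * |ξ|) - tanh (√μ * |ρ|)| := by
        rw [add_sub_add_left_eq_sub, ← mul_sub, abs_mul, abs_of_nonneg hγ0]
    _ ≤ |tanh (√μ * |ξ|) - tanh (√μ * |ρ|)| := mul_le_of_le_one_left (abs_nonneg _) hγ1

theorem abs_symbolA_sub_le_one (ξ ρ : ℝ) : |symbolA μ γ ξ - symbolA μ γ ρ| ≤ 1 := by
  have h0 (x : ℝ) : 0 ≤ tanh (√μ * |x|) := tanh_nonneg_s13 (by positivity)
  refine (abs_symbolA_sub_le hγ0 hγ1 ξ ρ).trans (abs_sub_le_iff.mpr ⟨?_, ?_⟩) <;>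
  linarith [tanh_lt_one (√μ * |ξ|), tanh_lt_one (√μ * |ρ|), h0 ξ, h0 ρ]

theorem abs_symbolA_sub_mul_le_of_two_mul_le (hμ : μ ≤ 1) {ξ ρ : ℝ}
    (h : 2 * |ξ - ρ| ≤ |ρ|) :
    |symbolA μ γ ξ - symbolA μ γ ρ| * (1 + |ρ|) ≤ 4 * |ξ - ρ| := by
  set r := √μ * |ρ| with hr
  have hr0 : 0 ≤ r := by positivity
  have hξ : r / 2 ≤ √μ * |ξ| := by
    have : |ρ| ≤ 2 * |ξ| := by linarith [abs_sub_abs_le_abs_sub ρ ξ, abs_sub_comm ξ ρ]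
    rw [hr]
    nlinarith [sqrt_nonneg μ]
  have htanh : |tanh (√μ * |ξ|) - tanh r| ≤ 4 * exp (-r) * (√μ * |ξ - ρ|) := by
    calc |tanh (√μ * |ξ|) - tanh r| ≤ 4 * exp (-(2 * (r / 2))) * |√μ * |ξ| - r| :=
          abs_tanh_sub_tanh_le hξ (by linarith)
      _ ≤ 4 * exp (-r) * (√μ * |ξ - ρ|) := by
          rw [mul_div_cancel₀ r two_ne_zero, hr, ← mul_sub, abs_mul,
            abs_of_nonneg (sqrt_nonneg μ)]
          gcongr 4 * exp (-r) * (√μ * ?_)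
          exact abs_abs_sub_abs_le_abs_sub ξ ρ
  have hdecay : (√μ + r) * exp (-r) ≤ 1 := by
    rw [exp_neg, ← div_eq_mul_inv, div_le_one (exp_pos r)]
    linarith [add_one_le_exp r, sqrt_le_one.mpr hμ]
  calc |symbolA μ γ ξ - symbolA μ γ ρ| * (1 + |ρ|)
      ≤ 4 * exp (-r) * (√μ * |ξ - ρ|) * (1 + |ρ|) := by
        gcongr
        exact (abs_symbolA_sub_le hγ0 hγ1 ξ ρ).trans htanh
    _ = 4 * ((√μ + r) * exp (-r)) * |ξ - ρ| := by ring
    _ ≤ 4 * 1 * |ξ - ρ| := by gcongr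
    _ = 4 * |ξ - ρ| := by ring

end symbolA

/-- kernel bound for `a(ξ) = (1+γtanh(√μ|ξ|))^{-1/2}`:
`|a(ξ) − a(ρ)|·⟨ρ⟩ ≤ C⟨ξ−ρ⟩` uniformly in `μ, γ ∈ (0,1)`. -/
theorem kernel_bound_a :
    ∃ C > (0:ℝ), ∀ μ ∈ Set.Ioo (0:ℝ) 1, ∀ γ ∈ Set.Ioo (0:ℝ) 1, ∀ ξ ρ : ℝ,
      |Real.sqrt ((1 + γ * Real.tanh (Real.sqrt μ * |ξ|))⁻¹) -
          Real.sqrt ((1 + γ * Real.tanh (Real.sqrt μ * |ρ|))⁻¹)| *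
        Real.sqrt (1 + ρ ^ 2) ≤
      C * Real.sqrt (1 + (ξ - ρ) ^ 2) := by
  refine ⟨4, by norm_num, ?_⟩
  rintro μ ⟨-, hμ1⟩ γ ⟨hγ0, hγ1⟩ ξ ρ
  change |symbolA μ γ ξ - symbolA μ γ ρ| * √(1 + ρ ^ 2) ≤ 4 * √(1 + (ξ - ρ) ^ 2)
  have hρ : √(1 + ρ ^ 2) ≤ 1 + |ρ| :=
    sqrt_le_iff.mpr ⟨by positivity, by nlinarith [sq_abs ρ, abs_nonneg ρ]⟩
  have hd : |ξ - ρ| ≤ √(1 + (ξ - ρ) ^ 2) := abs_le_sqrt (by linarith)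
  have hd1 : 1 ≤ √(1 + (ξ - ρ) ^ 2) := one_le_sqrt.mpr (le_add_of_nonneg_right (sq_nonneg _))
  rcases le_or_gt (2 * |ξ - ρ|) |ρ| with hfar | hnear
  · calc |symbolA μ γ ξ - symbolA μ γ ρ| * √(1 + ρ ^ 2)
        ≤ |symbolA μ γ ξ - symbolA μ γ ρ| * (1 + |ρ|) := by gcongr
      _ ≤ 4 * |ξ - ρ| := abs_symbolA_sub_mul_le_of_two_mul_le hγ0.le hγ1.le hμ1.le hfar
      _ ≤ 4 * √(1 + (ξ - ρ) ^ 2) := by gcongr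
  · calc |symbolA μ γ ξ - symbolA μ γ ρ| * √(1 + ρ ^ 2) ≤ 1 * (1 + |ρ|) := by
          gcongr
          exact abs_symbolA_sub_le_one hγ0.le hγ1.le ξ ρ
      _ ≤ 4 * √(1 + (ξ - ρ) ^ 2) := by linarith
end
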